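/- For a ≥ arcosh(√(3+√5)/2), ϱ'(a) = ∫₀^∞ sinh(a+t)·(5cosh²(a+t) − cosh²(3a+t))/(cosh²(a+t)·√(sinh(2t)·sinh³(4a+2t))) dt ≤ 0; i.e., ϱ is non-increasing on [A₃, ∞). -/

import Mathlib

open Real MeasureTheory

noncomputable def varrho (a : ℝ) : ℝ :=
  ∫ t in Set.Ioi (0:ℝ),
    Real.sinh (2*a) /
      (Real.cosh (a+t) * Real.sqrt (Real.sinh (2*(a+t))^2 - Real.sinh (2*a)^2))

noncomputable def arcosh (x : ℝ) : ℝ := Real.log (x + Real.sqrt (x^2 - 1))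

noncomputable def E (a : ℝ) : ℝ :=
  ∫ t in Set.Ioi (0:ℝ),
    Real.sinh (a+t) * (5 * Real.cosh (a+t)^2 - Real.cosh (3*a+t)^2) /
      (Real.cosh (a+t)^2 * Real.sqrt (Real.sinh (2*t) * Real.sinh (4*a+2*t)^3))


/-!
Since `sinh² (2(a+t)) - sinh² (2a) = sinh 2t · sinh (4a+2t)`, the integrand of `ϱ` and its
`a`-derivative are both `O(t^(-1/2) e^(-t))` on `(0, ∞)`, locally uniformly in `a > 0`, so `ϱ` can
be differentiated under the integral sign and `ϱ' = E` on `(0, ∞)`. The integrand of `E` has the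
sign of `5 cosh² (a+t) - cosh² (3a+t)`. By the product-to-sum formulas `cosh (3a+t) / cosh (a+t)`
increases with `t ≥ 0`, so it is at least `cosh 3a / cosh a = 4 cosh² a - 3`, which is `≥ √5`
exactly when `a ≥ arcosh (√(3+√5)/2)`.
-/

lemma sinh_sq_sub_sinh_sq (u v : ℝ) : sinh u ^ 2 - sinh v ^ 2 = sinh (u - v) * sinh (u + v) := by
  rw [sinh_sub, sinh_add]
  linear_combination sinh v ^ 2 * cosh_sq u - sinh u ^ 2 * cosh_sq v

lemma cosh_add_le_exp_mul_cosh {x : ℝ} (hx : 0 ≤ x) (u : ℝ) : cosh (x + u) ≤ exp x * cosh u := by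
  have hsu : sinh u ≤ cosh u := (sinh_lt_cosh u).le
  have hsx : 0 ≤ sinh x := sinh_nonneg_iff.mpr hx
  rw [cosh_add, ← cosh_add_sinh x]
  nlinarith

lemma sinh_mul_exp_le_sinh_add (b : ℝ) {u : ℝ} (hu : 0 ≤ u) : sinh b * exp u ≤ sinh (b + u) := by
  have hsb : sinh b ≤ cosh b := (sinh_lt_cosh b).le
  have hsu : 0 ≤ sinh u := sinh_nonneg_iff.mpr hu
  rw [sinh_add, ← cosh_add_sinh u]
  nlinarith

lemma cosh_three_mul_mul_cosh_add_le {a t : ℝ} (ha : 0 ≤ a) (ht : 0 ≤ t) :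
    cosh (3 * a) * cosh (a + t) ≤ cosh a * cosh (3 * a + t) := by
  have h : cosh (2 * a - t) ≤ cosh (2 * a + t) := by
    rw [cosh_le_cosh, abs_le]; constructor <;> cases abs_cases (2 * a + t) <;> linarith
  have e1 : 2 * (cosh (3 * a) * cosh (a + t)) = cosh (4 * a + t) + cosh (2 * a - t) := by
    rw [show 4 * a + t = 3 * a + (a + t) by ring, show 2 * a - t = 3 * a - (a + t) by ring,
      cosh_add (3 * a), cosh_sub (3 * a)]; ring
  have e2 : 2 * (cosh a * cosh (3 * a + t)) = cosh (4 * a + t) + cosh (2 * a + t) := by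
    rw [show 4 * a + t = (3 * a + t) + a by ring, show 2 * a + t = (3 * a + t) - a by ring,
      cosh_add (3 * a + t), cosh_sub (3 * a + t)]; ring
  linarith

lemma mul_cosh_add_le_cosh_three_mul_add {k a t : ℝ} (ha : 0 ≤ a) (ht : 0 ≤ t)
    (hk : k * cosh a ≤ cosh (3 * a)) : k * cosh (a + t) ≤ cosh (3 * a + t) := by
  have h := mul_le_mul_of_nonneg_right hk (cosh_pos (a + t)).le
  refine le_of_mul_le_mul_left ?_ (cosh_pos a)
  linarith [cosh_three_mul_mul_cosh_add_le ha ht]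

lemma sqrt_sinh_mul_sqrt_mul_exp_le {b y t : ℝ} (hb : 0 ≤ b) (hby : b ≤ y) (ht : 0 ≤ t) :
    √(sinh b) * (√t * exp t) ≤ √(sinh (2 * t) * sinh (y + 2 * t)) := by
  have hsb : 0 ≤ sinh b := sinh_nonneg_iff.mpr hb
  have h1 : 2 * t ≤ sinh (2 * t) := self_le_sinh_iff.mpr (by linarith)
  have h2 : sinh b * exp (2 * t) ≤ sinh (y + 2 * t) :=
    (sinh_mul_exp_le_sinh_add b (by linarith)).trans (sinh_le_sinh.mpr (by linarith))
  rw [← sqrt_sq (exp_pos t).le, ← sqrt_mul ht, ← sqrt_mul hsb]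
  apply sqrt_le_sqrt
  rw [← exp_nat_mul, Nat.cast_ofNat]
  calc sinh b * (t * exp (2 * t)) ≤ 2 * t * (sinh b * exp (2 * t)) := by
        nlinarith [mul_nonneg (mul_nonneg hsb (exp_pos (2 * t)).le) ht]
    _ ≤ sinh (2 * t) * sinh (y + 2 * t) := by gcongr

lemma sqrt_mul_pow_three (p : ℝ) {q : ℝ} (hq : 0 ≤ q) : √(p * q ^ 3) = q * √(p * q) := by
  rw [show p * q ^ 3 = q ^ 2 * (p * q) by ring, sqrt_mul (sq_nonneg q), sqrt_sq hq]

lemma integrableOn_inv_sqrt_mul_exp : IntegrableOn (fun t => (√t * exp t)⁻¹) (Set.Ioi 0) := by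
  refine (GammaIntegral_convergent one_half_pos).congr_fun (fun t ht => ?_) measurableSet_Ioi
  dsimp only
  rw [show (1 / 2 : ℝ) - 1 = -(1 / 2) by norm_num, rpow_neg (le_of_lt ht), ← sqrt_eq_rpow,
    exp_neg, mul_inv, mul_comm]

lemma one_lt_sqrt_three_add_sqrt_five_div_two : 1 < √(3 + √5) / 2 := by
  have h5 : 1 < √5 := by rw [lt_sqrt zero_le_one]; norm_num
  have : 2 < √(3 + √5) := by rw [lt_sqrt zero_le_two]; linarith
  linarith

lemma sqrt_five_mul_cosh_le_cosh_three_mul {a : ℝ} (ha : Real.arcosh (√(3 + √5) / 2) ≤ a) :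
    √5 * cosh a ≤ cosh (3 * a) := by
  have h1 := one_lt_sqrt_three_add_sqrt_five_div_two
  have hA : 0 ≤ Real.arcosh (√(3 + √5) / 2) := arcosh_nonneg h1.le
  have hca : √(3 + √5) / 2 ≤ cosh a := by
    rw [← cosh_arcosh h1.le, cosh_le_cosh, abs_of_nonneg hA, abs_of_nonneg (hA.trans ha)]
    exact ha
  have h4 : √5 ≤ 4 * cosh a ^ 2 - 3 := by
    have := pow_le_pow_left₀ (by positivity) hca 2
    rw [div_pow, sq_sqrt (by positivity)] at this
    linarith
  rw [cosh_three_mul]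
  nlinarith [cosh_pos a]

noncomputable def varrhoIntegrand (x t : ℝ) : ℝ :=
  sinh (2 * x) / (cosh (x + t) * √(sinh (2 * (x + t)) ^ 2 - sinh (2 * x) ^ 2))

noncomputable def varrhoIntegrandDeriv (x t : ℝ) : ℝ :=
  sinh (x + t) * (5 * cosh (x + t) ^ 2 - cosh (3 * x + t) ^ 2) /
    (cosh (x + t) ^ 2 * √(sinh (2 * t) * sinh (4 * x + 2 * t) ^ 3))

lemma varrhoIntegrand_eq (x t : ℝ) :
    varrhoIntegrand x t =
      sinh (2 * x) / (cosh (x + t) * √(sinh (2 * t) * sinh (4 * x + 2 * t))) := by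
  rw [varrhoIntegrand, sinh_sq_sub_sinh_sq, show 2 * (x + t) - 2 * x = 2 * t by ring,
    show 2 * (x + t) + 2 * x = 4 * x + 2 * t by ring]

lemma sinh_add_mul_five_cosh_sq_sub_cosh_sq (x t : ℝ) :
    sinh (x + t) * (5 * cosh (x + t) ^ 2 - cosh (3 * x + t) ^ 2)
      = (2 * cosh (2 * x) * cosh (x + t) - sinh (2 * x) * sinh (x + t)) * sinh (4 * x + 2 * t)
        - 2 * sinh (2 * x) * cosh (x + t) * cosh (4 * x + 2 * t) := by
  rw [show 4 * x + 2 * t = (x + x) + ((x + t) + (x + t)) by ring,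
    show 3 * x + t = (x + x) + (x + t) by ring, show 2 * x = x + x by ring]
  generalize x + t = u
  simp only [sinh_eq, cosh_eq, neg_add, exp_add, exp_neg]
  field_simp
  ring

lemma hasDerivAt_varrhoIntegrand {x t : ℝ} (hx : 0 < x) (ht : 0 < t) :
    HasDerivAt (varrhoIntegrand · t) (varrhoIntegrandDeriv x t) x := by
  have hs : 0 < sinh (2 * t) := sinh_pos_iff.mpr (by linarith)
  have hS : 0 < sinh (4 * x + 2 * t) := sinh_pos_iff.mpr (by linarith)
  have hsS := mul_pos hs hS
  have hnum : HasDerivAt (fun y => sinh (2 * y)) (cosh (2 * x) * 2) x :=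
    ((hasDerivAt_id x).const_mul 2).sinh.congr_deriv (by simp)
  have hc : HasDerivAt (fun y => cosh (y + t)) (sinh (x + t)) x :=
    ((hasDerivAt_id x).add_const t).cosh.congr_deriv (by simp)
  have hS' : HasDerivAt (fun y => sinh (2 * t) * sinh (4 * y + 2 * t))
      (sinh (2 * t) * (cosh (4 * x + 2 * t) * 4)) x :=
    (((hasDerivAt_id x).const_mul 4).add_const (2 * t)).sinh.const_mul _ |>.congr_deriv (by simp)
  rw [show (varrhoIntegrand · t) = _ from funext (varrhoIntegrand_eq · t)]
  refine (hnum.div (hc.mul (hS'.sqrt hsS.ne'))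
    (mul_pos (cosh_pos _) (sqrt_pos.mpr hsS)).ne').congr_deriv ?_
  have hσ := sq_sqrt hsS.le
  have hσ0 := sqrt_pos.mpr hsS
  simp only [Pi.mul_apply]
  rw [varrhoIntegrandDeriv, sqrt_mul_pow_three _ hS.le]
  generalize √(sinh (2 * t) * sinh (4 * x + 2 * t)) = σ at hσ hσ0 ⊢
  field_simp
  rw [hσ, show x * 4 = 4 * x by ring, show x * 3 = 3 * x by ring]
  linear_combination
    -2 * sinh (2 * t) * sinh (4 * x + 2 * t) * sinh_add_mul_five_cosh_sq_sub_cosh_sq x t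

lemma abs_varrhoIntegrand_le {x t : ℝ} (hx : 0 < x) (ht : 0 < t) :
    |varrhoIntegrand x t| ≤ √(sinh (2 * x)) * (√t * exp t)⁻¹ := by
  have h2x : 0 < sinh (2 * x) := sinh_pos_iff.mpr (by linarith)
  have hlow := sqrt_sinh_mul_sqrt_mul_exp_le (b := 2 * x) (y := 4 * x) (by linarith) (by linarith)
    ht.le
  have hpos : 0 < √(sinh (2 * x)) * (√t * exp t) := by positivity
  rw [varrhoIntegrand_eq, abs_of_nonneg (by positivity)]
  calc sinh (2 * x) / (cosh (x + t) * √(sinh (2 * t) * sinh (4 * x + 2 * t)))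
      ≤ sinh (2 * x) / (√(sinh (2 * x)) * (√t * exp t)) := by
        refine div_le_div_of_nonneg_left h2x.le hpos ?_
        exact hlow.trans (le_mul_of_one_le_left (sqrt_nonneg _) (one_le_cosh _))
    _ = √(sinh (2 * x)) * (√t * exp t)⁻¹ := by
        rw [div_mul_eq_div_div, div_sqrt, div_eq_mul_inv]

lemma abs_varrhoIntegrandDeriv_le {b x t : ℝ} (hb : 0 < b) (hbx : b ≤ 4 * x) (ht : 0 < t) :
    |varrhoIntegrandDeriv x t| ≤ (5 + exp (4 * x)) / √(sinh b) * (√t * exp t)⁻¹ := by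
  have hS : 0 < sinh (4 * x + 2 * t) := sinh_pos_iff.mpr (by linarith)
  have hc := cosh_pos (x + t)
  have hσ : 0 < √(sinh (2 * t) * sinh (4 * x + 2 * t)) :=
    sqrt_pos.mpr (mul_pos (sinh_pos_iff.mpr (by linarith)) hS)
  have hsh : |sinh (x + t)| ≤ sinh (4 * x + 2 * t) := by
    rw [abs_of_nonneg (sinh_nonneg_iff.mpr (by linarith))]
    exact sinh_le_sinh.mpr (by linarith)
  have hcosh3 : cosh (3 * x + t) ≤ exp (2 * x) * cosh (x + t) := by
    rw [show 3 * x + t = 2 * x + (x + t) by ring]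
    exact cosh_add_le_exp_mul_cosh (by linarith) _
  have hfac : |5 * cosh (x + t) ^ 2 - cosh (3 * x + t) ^ 2|
      ≤ (5 + exp (4 * x)) * cosh (x + t) ^ 2 := by
    have : cosh (3 * x + t) ^ 2 ≤ exp (4 * x) * cosh (x + t) ^ 2 :=
      calc cosh (3 * x + t) ^ 2 ≤ (exp (2 * x) * cosh (x + t)) ^ 2 :=
            pow_le_pow_left₀ (cosh_pos _).le hcosh3 2
        _ = exp (4 * x) * cosh (x + t) ^ 2 := by
            rw [mul_pow, ← exp_nat_mul]; ring_nf
    rw [abs_le]; constructor <;> nlinarith [sq_nonneg (cosh (3 * x + t))]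
  have hlow := sqrt_sinh_mul_sqrt_mul_exp_le hb.le hbx ht.le
  rw [varrhoIntegrandDeriv, sqrt_mul_pow_three _ hS.le, abs_div, abs_mul,
    abs_of_pos (mul_pos (pow_pos hc 2) (mul_pos hS hσ))]
  calc |sinh (x + t)| * |5 * cosh (x + t) ^ 2 - cosh (3 * x + t) ^ 2|
        / (cosh (x + t) ^ 2 * (sinh (4 * x + 2 * t) * √(sinh (2 * t) * sinh (4 * x + 2 * t))))
      ≤ sinh (4 * x + 2 * t) * ((5 + exp (4 * x)) * cosh (x + t) ^ 2)
        / (cosh (x + t) ^ 2 * (sinh (4 * x + 2 * t) * √(sinh (2 * t) * sinh (4 * x + 2 * t)))) := by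
        gcongr
    _ = (5 + exp (4 * x)) / √(sinh (2 * t) * sinh (4 * x + 2 * t)) := by
        field_simp
    _ ≤ (5 + exp (4 * x)) / (√(sinh b) * (√t * exp t)) := by
        gcongr
    _ = (5 + exp (4 * x)) / √(sinh b) * (√t * exp t)⁻¹ := by
        rw [div_mul_eq_div_div, div_eq_mul_inv _ (√t * exp t)]

lemma hasDerivAt_varrho {a : ℝ} (ha : 0 < a) : HasDerivAt varrho (E a) a := by
  have hball : ∀ x ∈ Metric.ball a (a / 2), a / 2 < x ∧ x < 3 * a / 2 := fun x hx => by
    rw [Metric.mem_ball, Real.dist_eq, abs_lt] at hx; constructor <;> linarith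
  have hmeas : ∀ x, AEStronglyMeasurable (varrhoIntegrand x) (volume.restrict (Set.Ioi 0)) :=
    fun x => Measurable.aestronglyMeasurable (by unfold varrhoIntegrand; fun_prop)
  refine (hasDerivAt_integral_of_dominated_loc_of_deriv_le (F := varrhoIntegrand)
    (F' := varrhoIntegrandDeriv) (Metric.ball_mem_nhds a (half_pos ha))
    (.of_forall hmeas) ?_
    (Measurable.aestronglyMeasurable (by unfold varrhoIntegrandDeriv; fun_prop)) ?_
    (integrableOn_inv_sqrt_mul_exp.const_mul ((5 + exp (6 * a)) / √(sinh (2 * a)))) ?_).2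
  · refine (integrableOn_inv_sqrt_mul_exp.const_mul √(sinh (2 * a))).mono' (hmeas a) ?_
    filter_upwards [ae_restrict_mem measurableSet_Ioi] with t ht
    exact abs_varrhoIntegrand_le ha ht
  · filter_upwards [ae_restrict_mem measurableSet_Ioi] with t ht x hx
    obtain ⟨hx1, hx2⟩ := hball x hx
    refine (abs_varrhoIntegrandDeriv_le (b := 2 * a) (by linarith) (by linarith) ht).trans ?_
    gcongr (5 + ?_) / _ * _
    exact exp_le_exp.mpr (by linarith)
  · filter_upwards [ae_restrict_mem measurableSet_Ioi] with t ht x hx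
    exact hasDerivAt_varrhoIntegrand (by linarith [hball x hx]) ht

lemma varrhoIntegrandDeriv_nonpos {a t : ℝ} (ha : 0 ≤ a) (ht : 0 ≤ t)
    (h5 : √5 * cosh a ≤ cosh (3 * a)) : varrhoIntegrandDeriv a t ≤ 0 := by
  have hsq : 5 * cosh (a + t) ^ 2 ≤ cosh (3 * a + t) ^ 2 :=
    calc 5 * cosh (a + t) ^ 2 = (√5 * cosh (a + t)) ^ 2 := by
          rw [mul_pow, sq_sqrt (by norm_num : (0 : ℝ) ≤ 5)]
      _ ≤ cosh (3 * a + t) ^ 2 :=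
          pow_le_pow_left₀ (by positivity) (mul_cosh_add_le_cosh_three_mul_add ha ht h5) 2
  refine div_nonpos_of_nonpos_of_nonneg ?_ (by positivity)
  exact mul_nonpos_of_nonneg_of_nonpos (sinh_nonneg_iff.mpr (by linarith)) (by linarith)

theorem varrho_antitone :
    (∀ a, _root_.arcosh (Real.sqrt (3 + Real.sqrt 5) / 2) ≤ a →
      HasDerivAt varrho (E a) a ∧ E a ≤ 0) ∧
    AntitoneOn varrho (Set.Ici (_root_.arcosh (Real.sqrt (3 + Real.sqrt 5) / 2))) := by
  -- `_root_.arcosh` unfolds to `Real.arcosh`, so hypotheses about one serve for the other.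
  have hA : 0 < Real.arcosh (√(3 + √5) / 2) := arcosh_pos one_lt_sqrt_three_add_sqrt_five_div_two
  have hE : ∀ a, _root_.arcosh (√(3 + √5) / 2) ≤ a → HasDerivAt varrho (E a) a ∧ E a ≤ 0 :=
    fun a ha => ⟨hasDerivAt_varrho (hA.trans_le ha),
      setIntegral_nonpos measurableSet_Ioi fun t ht => varrhoIntegrandDeriv_nonpos
        (hA.le.trans ha) (le_of_lt ht) (sqrt_five_mul_cosh_le_cosh_three_mul ha)⟩
  refine ⟨hE, antitoneOn_of_hasDerivWithinAt_nonpos (f' := E) (convex_Ici _)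
    (fun a ha => (hE a ha).1.continuousAt.continuousWithinAt) (fun a ha => ?_) (fun a ha => ?_)⟩
  · rw [interior_Ici] at ha
    exact (hE a ha.le).1.hasDerivWithinAt
  · rw [interior_Ici] at ha
    exact (hE a ha.le).2
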